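/- Let G and G' be node-neighboring graphs on V with G ⊆ G', differing at a vertex u, and let τ ∈ ℕ. Then LPDelN(G, τ) ≤ LPDelN(G', τ) ≤ LPDelN(G, τ) + 1. (Equivalently, the paper's query Q_LP-Del-N = −LPDelN has global sensitivity 1 under node-level neighboring and is sensitivity-monotonic.) -/

import Mathlib

open scoped symmDiff

variable {V : Type*}

noncomputable section

/-- Degree of a vertex `v` in `G`. -/
def deg [Fintype V] (G : SimpleGraph V) (v : V) : ℕ :=
  (G.neighborSet v).ncard

/-- Maximum degree of `G`. -/
def maxDeg [Fintype V] (G : SimpleGraph V) : ℕ :=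
  Finset.univ.sup (deg G)

/-- Number of vertices of `G` with degree at least `τ`. -/
def Ntau [Fintype V] (G : SimpleGraph V) (τ : ℕ) : ℕ :=
  {v : V | τ ≤ deg G v}.ncard

/-- Edge distance: the number of edges in the symmetric difference of the edge sets. -/
def edgeDist (G G' : SimpleGraph V) : ℕ :=
  (G.edgeSet ∆ G'.edgeSet).ncard

/-- Lexicographic key of an edge: the unordered pair written with its smaller endpoint first,
compared lexicographically. -/
def edgeKey [LinearOrder V] (e : Sym2 V) : Lex (V × V) :=
  Sym2.lift ⟨fun a b => toLex (min a b, max a b), fun a b => by simp only []; rw [min_comm, max_comm]⟩ e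

/-- `e` is among the `τ` smallest edges (in the fixed lexicographic order) incident to `v`
in `G`. -/
def clipKeep [Fintype V] [LinearOrder V] (G : SimpleGraph V) (τ : ℕ) (v : V)
    (e : Sym2 V) : Prop :=
  {e' ∈ G.incidenceSet v | edgeKey e' ≤ edgeKey e}.ncard ≤ τ

/-- The clipped graph `Clip G τ`: an edge of `G` is retained iff, for each of its two
endpoints `v`, it is among the `τ` smallest edges incident to `v` in `G`. -/
def Clip [Fintype V] [LinearOrder V] (G : SimpleGraph V) (τ : ℕ) : SimpleGraph V where
  Adj a b := G.Adj a b ∧ clipKeep G τ a s(a, b) ∧ clipKeep G τ b s(a, b)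
  symm := by
    refine ⟨fun a b h => ?_⟩
    refine ⟨h.1.symm, ?_, ?_⟩
    · rw [Sym2.eq_swap]; exact h.2.2
    · rw [Sym2.eq_swap]; exact h.2.1
  loopless := ⟨fun a h => G.irrefl h.1⟩

/-- Naive clipping: delete every edge having at least one endpoint of degree `> τ` in `G`. -/
def NaiveClip [Fintype V] (G : SimpleGraph V) (τ : ℕ) : SimpleGraph V where
  Adj a b := G.Adj a b ∧ deg G a ≤ τ ∧ deg G b ≤ τ
  symm := ⟨fun _ _ h => ⟨h.1.symm, h.2.2, h.2.1⟩⟩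
  loopless := ⟨fun a h => G.irrefl h.1⟩

/-- The graph obtained from `G` by deleting all vertices in `S` together with their
incident edges. -/
def deleteVerts (G : SimpleGraph V) (S : Set V) : SimpleGraph V where
  Adj a b := G.Adj a b ∧ a ∉ S ∧ b ∉ S
  symm := ⟨fun _ _ h => ⟨h.1.symm, h.2.2, h.2.1⟩⟩
  loopless := ⟨fun a h => G.irrefl h.1⟩

/-- `DelN G τ`: the minimum cardinality of a vertex set whose deletion bounds the maximum
degree of `G` by `τ`. (The paper's `Q_Del-N(G, τ)` equals `-DelN G τ`.) -/
def DelN [Fintype V] (G : SimpleGraph V) (τ : ℕ) : ℕ :=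
  sInf {n | ∃ S : Set V, S.ncard = n ∧ maxDeg (deleteVerts G S) ≤ τ}

/-- Total excess of vertex degrees over `τ`. (The paper's `Q_Del-Deg(G, τ)` equals
`-fExcess G τ / 2`.) -/
def fExcess [Fintype V] (G : SimpleGraph V) (τ : ℕ) : ℕ :=
  ∑ v, (deg G v - τ)

/-- A `τ`-feasible pair `(x, y)` for the LP relaxation of node deletion. -/
structure IsFeasible [Fintype V] (G : SimpleGraph V) (τ : ℕ) (x : V → ℝ)
    (y : Sym2 V → ℝ) : Prop where
  x_mem : ∀ v, x v ∈ Set.Icc (0 : ℝ) 1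
  y_mem : ∀ e ∈ G.edgeSet, y e ∈ Set.Icc (0 : ℝ) 1
  edge_cons : ∀ a b, G.Adj a b → 1 - x a - x b ≤ y s(a, b)
  deg_cons : ∀ v, ∑ᶠ e ∈ G.incidenceSet v, y e ≤ (τ : ℝ)

/-- The LP value: infimum of `Σ_v x_v` over all `τ`-feasible pairs.
(The paper's `Q_LP-Del-N(G, τ)` equals `-LPDelN G τ`.) -/
def LPDelN [Fintype V] (G : SimpleGraph V) (τ : ℕ) : ℝ :=
  sInf {t : ℝ | ∃ x y, IsFeasible G τ x y ∧ t = ∑ v, x v}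

/- Deleting edges only relaxes the LP, so `LPDelN` is monotone. Conversely, a feasible pair
for `G` becomes feasible for `G'` once `x_u` is raised to `1`: every new edge is incident to `u`,
so its covering constraint holds with `y_e = 0`, and the degree constraints are unchanged.
This raises the objective by at most `1`. -/

lemma finsum_mem_le_finsum_mem_of_subset {α M : Type*} [AddCommMonoid M] [PartialOrder M]
    [IsOrderedAddMonoid M] {f : α → M} {s t : Set α}
    (ht : t.Finite) (hst : s ⊆ t) (hf : ∀ a ∈ t, 0 ≤ f a) :
    ∑ᶠ a ∈ s, f a ≤ ∑ᶠ a ∈ t, f a := by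
  rw [finsum_mem_eq_finite_toFinset_sum f (ht.subset hst), finsum_mem_eq_finite_toFinset_sum f ht]
  exact Finset.sum_le_sum_of_subset_of_nonneg (Set.Finite.toFinset_subset_toFinset.mpr hst)
    fun a ha _ => hf a (ht.mem_toFinset.mp ha)

lemma SimpleGraph.incidenceSet_inter_edgeSet_of_le {G G' : SimpleGraph V} (h : G ≤ G') (v : V) :
    G'.incidenceSet v ∩ G.edgeSet = G.incidenceSet v := by
  ext e
  constructor
  · rintro ⟨⟨-, hv⟩, he⟩
    exact ⟨he, hv⟩
  · rintro ⟨he, hv⟩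
    exact ⟨⟨SimpleGraph.edgeSet_mono h he, hv⟩, he⟩

section LPDelN

variable [Fintype V] {G G' : SimpleGraph V} {τ : ℕ}

lemma IsFeasible.of_le {x : V → ℝ} {y : Sym2 V → ℝ} (hf : IsFeasible G' τ x y) (h : G ≤ G') :
    IsFeasible G τ x y where
  x_mem := hf.x_mem
  y_mem e he := hf.y_mem e (SimpleGraph.edgeSet_mono h he)
  edge_cons a b hab := hf.edge_cons a b (h hab)
  deg_cons v := by
    refine le_trans ?_ (hf.deg_cons v)
    refine finsum_mem_le_finsum_mem_of_subset (Set.toFinite _) ?_ fun e he => (hf.y_mem e he.1).1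
    rw [← SimpleGraph.incidenceSet_inter_edgeSet_of_le h]
    exact Set.inter_subset_left

lemma IsFeasible.update_of_le [DecidableEq V] {x : V → ℝ} {y : Sym2 V → ℝ}
    (hf : IsFeasible G τ x y) (h : G ≤ G') {u : V}
    (hu : ∀ e ∈ G'.edgeSet, e ∉ G.edgeSet → u ∈ e) :
    IsFeasible G' τ (Function.update x u 1) (G.edgeSet.indicator y) where
  x_mem v := by
    rcases eq_or_ne v u with rfl | hv
    · simp
    · simpa [hv] using hf.x_mem v
  y_mem e _ := by
    by_cases he : e ∈ G.edgeSet
    · simpa [he] using hf.y_mem e he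
    · simp [he]
  edge_cons a b hab := by
    have hx : ∀ v, 0 ≤ Function.update x u 1 v ∧ x v ≤ Function.update x u 1 v := fun v => by
      rcases eq_or_ne v u with rfl | hv
      · simpa using (hf.x_mem v).2
      · simpa [hv] using (hf.x_mem v).1
    by_cases he : s(a, b) ∈ G.edgeSet
    · have := hf.edge_cons a b he
      rw [Set.indicator_of_mem he]
      linarith [hx a, hx b]
    · have := (hx a).1
      have := (hx b).1
      rw [Set.indicator_of_notMem he]
      rcases Sym2.mem_iff.mp (hu _ hab he) with rfl | rfl <;> simp <;> linarith
  deg_cons v := by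
    rw [finsum_mem_def, Set.indicator_indicator, SimpleGraph.incidenceSet_inter_edgeSet_of_le h,
      ← finsum_mem_def]
    exact hf.deg_cons v

lemma sum_update_le_sum_add_one [DecidableEq V] {x : V → ℝ} (hx : ∀ v, 0 ≤ x v) (u : V) :
    ∑ v, Function.update x u 1 v ≤ ∑ v, x v + 1 := by
  rw [Finset.sum_update_of_mem (Finset.mem_univ u), add_comm]
  have := Finset.sum_le_sum_of_subset_of_nonneg (Finset.sdiff_subset (s := Finset.univ) (t := {u}))
    fun v _ _ => hx v
  linarith

lemma lpDelN_le_sum {x : V → ℝ} {y : Sym2 V → ℝ} (hf : IsFeasible G τ x y) :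
    LPDelN G τ ≤ ∑ v, x v :=
  csInf_le ⟨0, by rintro t ⟨x, y, hf, rfl⟩; exact Finset.sum_nonneg fun v _ => (hf.x_mem v).1⟩
    ⟨x, y, hf, rfl⟩

lemma le_lpDelN {c : ℝ} (h : ∀ x y, IsFeasible G τ x y → c ≤ ∑ v, x v) : c ≤ LPDelN G τ :=
  le_csInf ⟨_, 1, 0, ⟨fun _ => by simp, fun _ _ => by simp, fun _ _ _ => by simp,
    fun _ => by simp⟩, rfl⟩ (by rintro t ⟨x, y, hf, rfl⟩; exact h x y hf)

end LPDelN

/-- For node-neighboring graphs `G ⊆ G'` differing at `u`,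
`LPDelN(G, τ) ≤ LPDelN(G', τ) ≤ LPDelN(G, τ) + 1`: the query `Q_LP-Del-N = -LPDelN` has
global sensitivity `1` under node-level neighboring and is sensitivity-monotonic. -/
theorem lpDelN_sensitivity [Fintype V]
    (G G' : SimpleGraph V) (u : V) (τ : ℕ)
    (hsub : G ≤ G')
    (hdiff : ∀ e ∈ G'.edgeSet, e ∉ G.edgeSet → u ∈ e) :
    LPDelN G τ ≤ LPDelN G' τ ∧ LPDelN G' τ ≤ LPDelN G τ + 1 := by
  classical
  refine ⟨le_lpDelN fun x y hf => lpDelN_le_sum (hf.of_le hsub), ?_⟩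
  suffices LPDelN G' τ - 1 ≤ LPDelN G τ by linarith
  refine le_lpDelN fun x y hf => ?_
  have := (lpDelN_le_sum (hf.update_of_le hsub hdiff)).trans
    (sum_update_le_sum_add_one (fun v => (hf.x_mem v).1) u)
  linarith

end
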